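/- Let φ : ℂ[y₁,…,y₆] → ℂ[u₂,u₃,u₄,u₅,u₆] be the ℂ-algebra homomorphism between multivariate polynomial rings determined by φ(y₁) = u₂u₃u₄u₅u₆ and φ(yᵢ) = uᵢ³ for i = 2,…,6. Then the kernel of φ is the ideal generated by the single binomial y₂y₃y₄y₅y₆ − y₁³. -/

import Mathlib

open MvPolynomial

/-- φ(y₁) = u₂u₃u₄u₅u₆, φ(yᵢ) = uᵢ³ for i = 2,…,6 (variables u₂,…,u₆ indexed by Fin 5). -/
noncomputable def phi15 : MvPolynomial (Fin 6) ℂ →ₐ[ℂ] MvPolynomial (Fin 5) ℂ :=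
  MvPolynomial.aeval fun i : Fin 6 =>
    if i = 0 then X 0 * X 1 * X 2 * X 3 * X 4
    else (X (Fin.mk (i - 1) (by omega)) : MvPolynomial (Fin 5) ℂ) ^ 3

noncomputable def psi15 (m : Fin 6 →₀ ℕ) : Fin 5 →₀ ℕ :=
  Finsupp.equivFunOnFinite.symm fun j => m 0 + 3 * m j.succ

lemma psi15_apply (m : Fin 6 →₀ ℕ) (j : Fin 5) : psi15 m j = m 0 + 3 * m j.succ := rfl

noncomputable def red15 (m : Fin 6 →₀ ℕ) : Fin 6 →₀ ℕ :=
  Finsupp.equivFunOnFinite.symm fun i => if i = 0 then m 0 % 3 else m i + m 0 / 3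

lemma red15_apply_zero (m : Fin 6 →₀ ℕ) : red15 m 0 = m 0 % 3 := by
  simp [red15]

lemma red15_apply_succ (m : Fin 6 →₀ ℕ) (j : Fin 5) :
    red15 m j.succ = m j.succ + m 0 / 3 := by
  simp [red15, Fin.succ_ne_zero j]

lemma psi15_red15 (m : Fin 6 →₀ ℕ) : psi15 (red15 m) = psi15 m := by
  ext j
  rw [psi15_apply, psi15_apply, red15_apply_succ, red15_apply_zero]
  omega

lemma phi15_monomial (m : Fin 6 →₀ ℕ) (c : ℂ) :
    phi15 (monomial m c) = monomial (psi15 m) c := by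
  rw [phi15, aeval_monomial, Finsupp.prod_fintype _ _ (fun i => pow_zero _)]
  rw [Fin.prod_univ_succ]
  have h1 : ∀ j : Fin 5,
      (if j.succ = (0 : Fin 6) then (X 0 * X 1 * X 2 * X 3 * X 4 : MvPolynomial (Fin 5) ℂ)
        else (X (Fin.mk ((j.succ : ℕ) - 1) (by omega)) : MvPolynomial (Fin 5) ℂ) ^ 3) ^ m j.succ
        = X j ^ (3 * m j.succ) := by
    intro j
    rw [if_neg (Fin.succ_ne_zero j)]
    have : (Fin.mk ((j.succ : ℕ) - 1) (by omega) : Fin 5) = j := by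
      ext; simp [Fin.val_succ]
    rw [this, ← pow_mul]
  rw [Finset.prod_congr rfl (fun j _ => h1 j)]
  have h2 : (X 0 * X 1 * X 2 * X 3 * X 4 : MvPolynomial (Fin 5) ℂ) = ∏ j : Fin 5, X j := by
    exact (Fin.prod_univ_five _).symm
  rw [if_pos rfl, h2]
  rw [monomial_eq, Finsupp.prod_fintype _ _ (fun i => pow_zero _)]
  rw [← Finset.prod_pow, ← Finset.prod_mul_distrib]
  rw [show (algebraMap ℂ (MvPolynomial (Fin 5) ℂ)) c = C c from rfl]
  refine congrArg (C c * ·) (Finset.prod_congr rfl ?_)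
  intro j _
  rw [← pow_add, psi15_apply]

lemma psi15_inj {m m' : Fin 6 →₀ ℕ} (hm : m 0 ≤ 2) (hm' : m' 0 ≤ 2)
    (h : psi15 m = psi15 m') : m = m' := by
  have hj : ∀ j : Fin 5, m 0 + 3 * m j.succ = m' 0 + 3 * m' j.succ := by
    intro j
    have := congrArg (fun f => f j) h
    simpa [psi15_apply] using this
  have h0 : m 0 = m' 0 := by have := hj 0; omega
  ext i
  induction i using Fin.cases with
  | zero => exact h0
  | succ j => have := hj j; omega

lemma sub_red_mem (m : Fin 6 →₀ ℕ) (c : ℂ) :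
    monomial m c - monomial (red15 m) c ∈
      Ideal.span {(X 1 * X 2 * X 3 * X 4 * X 5 - X 0 ^ 3 : MvPolynomial (Fin 6) ℂ)} := by
  set I := Ideal.span {(X 1 * X 2 * X 3 * X 4 * X 5 - X 0 ^ 3 : MvPolynomial (Fin 6) ℂ)} with hI
  rw [← Ideal.Quotient.eq]
  have hmono : ∀ n : Fin 6 →₀ ℕ, (monomial n c : MvPolynomial (Fin 6) ℂ)
      = C c * (X 0 ^ n 0 * ∏ j : Fin 5, X j.succ ^ n j.succ) := by
    intro n
    rw [monomial_eq, Finsupp.prod_fintype _ _ (fun i => pow_zero _), Fin.prod_univ_succ]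
  have hb : (X 1 * X 2 * X 3 * X 4 * X 5 : MvPolynomial (Fin 6) ℂ)
      = ∏ j : Fin 5, X j.succ := by
    rw [Fin.prod_univ_five]; rfl
  have key : (Ideal.Quotient.mk I (X 0 : MvPolynomial (Fin 6) ℂ)) ^ 3
      = Ideal.Quotient.mk I (∏ j : Fin 5, X j.succ) := by
    rw [← map_pow, Ideal.Quotient.eq, ← hb]
    rw [show (X 0 : MvPolynomial (Fin 6) ℂ) ^ 3 - (X 1 * X 2 * X 3 * X 4 * X 5)
      = -(X 1 * X 2 * X 3 * X 4 * X 5 - X 0 ^ 3) by ring]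
    exact neg_mem (Ideal.subset_span rfl)
  rw [hmono m, hmono (red15 m)]
  simp only [map_mul, map_pow, map_prod]
  rw [show m 0 = 3 * (m 0 / 3) + m 0 % 3 by omega]
  rw [red15_apply_zero]
  have hsplit : (Ideal.Quotient.mk I (X 0 : MvPolynomial (Fin 6) ℂ)) ^ (3 * (m 0 / 3) + m 0 % 3)
      = (Ideal.Quotient.mk I (∏ j : Fin 5, X j.succ)) ^ (m 0 / 3)
        * (Ideal.Quotient.mk I (X 0 : MvPolynomial (Fin 6) ℂ)) ^ (m 0 % 3) := by
    rw [pow_add, pow_mul, key]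
  rw [hsplit]
  have hprod : ∏ j : Fin 5, (Ideal.Quotient.mk I (X j.succ : MvPolynomial (Fin 6) ℂ))
        ^ (red15 m) j.succ
      = (∏ j : Fin 5, (Ideal.Quotient.mk I (X j.succ : MvPolynomial (Fin 6) ℂ)) ^ m j.succ)
        * (Ideal.Quotient.mk I (∏ j : Fin 5, (X j.succ : MvPolynomial (Fin 6) ℂ))) ^ (m 0 / 3) := by
    rw [map_prod, ← Finset.prod_pow, ← Finset.prod_mul_distrib]
    apply Finset.prod_congr rfl
    intro j _
    rw [red15_apply_succ, pow_add]
  rw [hprod]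
  ring

theorem stmt_15 :
    RingHom.ker phi15 =
      Ideal.span {(X 1 * X 2 * X 3 * X 4 * X 5 - X 0 ^ 3 : MvPolynomial (Fin 6) ℂ)} := by
  set I := Ideal.span {(X 1 * X 2 * X 3 * X 4 * X 5 - X 0 ^ 3 : MvPolynomial (Fin 6) ℂ)} with hI
  apply le_antisymm
  · intro p hp
    rw [RingHom.mem_ker] at hp
    set r : MvPolynomial (Fin 6) ℂ :=
      ∑ m ∈ p.support, monomial (red15 m) (coeff m p) with hr
    have hpr : p - r ∈ I := by
      have heq : p - r = ∑ m ∈ p.support,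
          (monomial m (coeff m p) - monomial (red15 m) (coeff m p)) := by
        rw [Finset.sum_sub_distrib]
        congr 1
        exact (support_sum_monomial_coeff p).symm
      rw [heq]
      exact Ideal.sum_mem _ fun m _ => sub_red_mem m _
    have hred : ∀ m ∈ r.support, m 0 ≤ 2 := by
      intro m hm
      rw [mem_support_iff] at hm
      have hex : ∃ m' ∈ p.support, red15 m' = m := by
        by_contra hc
        push_neg at hc
        apply hm
        rw [hr, coeff_sum]
        apply Finset.sum_eq_zero
        intro m' hm'
        rw [coeff_monomial, if_neg (hc m' hm')]
      obtain ⟨m', _, rfl⟩ := hex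
      rw [red15_apply_zero]
      omega
    have hphir : phi15 r = 0 := by
      have : phi15 r = phi15 p := by
        conv_rhs => rw [← support_sum_monomial_coeff p]
        rw [hr, map_sum, map_sum]
        apply Finset.sum_congr rfl
        intro m _
        rw [phi15_monomial, phi15_monomial, psi15_red15]
      rw [this, hp]
    have hr0 : r = 0 := by
      by_contra h0
      obtain ⟨m₀, hm₀⟩ := Finset.nonempty_of_ne_empty
        (fun he => h0 (by rwa [← support_eq_empty]))
      have hcoeff : coeff (psi15 m₀) (phi15 r) = coeff m₀ r := by
        conv_lhs => rw [← support_sum_monomial_coeff r, map_sum]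
        rw [Finset.sum_congr rfl (fun m _ => by rw [phi15_monomial])]
        rw [coeff_sum]
        rw [Finset.sum_eq_single m₀]
        · rw [coeff_monomial, if_pos rfl]
        · intro m hm hne
          rw [coeff_monomial, if_neg]
          intro hpsi
          exact hne (psi15_inj (hred m hm) (hred m₀ hm₀) hpsi)
        · intro habs
          exact absurd hm₀ habs
      rw [hphir, coeff_zero] at hcoeff
      exact (mem_support_iff.mp hm₀) hcoeff.symm
    have : p = p - r := by rw [hr0, sub_zero]
    rw [this]
    exact hpr
  · rw [Ideal.span_le]
    rintro q hq
    rw [Set.mem_singleton_iff] at hq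
    subst hq
    rw [SetLike.mem_coe, RingHom.mem_ker]
    have h1 : ∀ i : Fin 6, i ≠ 0 → phi15 (X i)
        = (X (Fin.mk ((i : ℕ) - 1) (by omega)) : MvPolynomial (Fin 5) ℂ) ^ 3 := by
      intro i hi
      rw [phi15, aeval_X, if_neg hi]
    have h0 : phi15 (X 0) = (X 0 * X 1 * X 2 * X 3 * X 4 : MvPolynomial (Fin 5) ℂ) := by
      rw [phi15, aeval_X, if_pos rfl]
    rw [map_sub, map_pow, map_mul, map_mul, map_mul, map_mul, h0,
      h1 1 (by decide), h1 2 (by decide), h1 3 (by decide), h1 4 (by decide), h1 5 (by decide)]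
    have e1 : (Fin.mk ((1 : Fin 6) - 1 : ℕ) (by omega) : Fin 5) = 0 := rfl
    have e2 : (Fin.mk ((2 : Fin 6) - 1 : ℕ) (by omega) : Fin 5) = 1 := rfl
    have e3 : (Fin.mk ((3 : Fin 6) - 1 : ℕ) (by omega) : Fin 5) = 2 := rfl
    have e4 : (Fin.mk ((4 : Fin 6) - 1 : ℕ) (by omega) : Fin 5) = 3 := rfl
    have e5 : (Fin.mk ((5 : Fin 6) - 1 : ℕ) (by omega) : Fin 5) = 4 := rfl
    rw [e1, e2, e3, e4, e5]
    ring
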